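/- The subgroup of PSL₂(ℤ) generated by the images of the six matrices A³, B²A⁻¹, A²B², ABA⁻², B⁻¹A⁻¹B, and AB⁻¹A⁻¹BA⁻¹ is a subgroup of Γ̄(2) of index 5 in Γ̄(2). -/

import Mathlib

/-- `SL(2, ℤ)`. -/
abbrev SL2Z := Matrix.SpecialLinearGroup (Fin 2) ℤ

/-- `PSL₂(ℤ)`, the quotient of `SL(2, ℤ)` by its center `{±I}`. -/
abbrev PSL2Z := SL2Z ⧸ Subgroup.center SL2Z

/-- The projection `SL(2, ℤ) → PSL₂(ℤ)`. -/
def projSL : SL2Z →* PSL2Z := QuotientGroup.mk' (Subgroup.center SL2Z)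

/-- `Γ̄(N)`, the image of the principal congruence subgroup `Γ(N)` in `PSL₂(ℤ)`. -/
def GammaBar (N : ℕ) : Subgroup PSL2Z := (CongruenceSubgroup.Gamma N).map projSL

/-- The matrix `A = [[1,2],[0,1]]` in `SL(2, ℤ)`. -/
def matA : SL2Z := ⟨!![1, 2; 0, 1], by norm_num [Matrix.det_fin_two_of]⟩

/-- The matrix `B = [[1,0],[2,1]]` in `SL(2, ℤ)`. -/
def matB : SL2Z := ⟨!![1, 0; 2, 1], by norm_num [Matrix.det_fin_two_of]⟩

/-- The matrix `T = [[1,1],[0,1]]` in `SL(2, ℤ)`. -/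
def matT : SL2Z := ⟨!![1, 1; 0, 1], by norm_num [Matrix.det_fin_two_of]⟩

/-- The matrix `L = [[1,0],[1,1]]` in `SL(2, ℤ)`. -/
def matL : SL2Z := ⟨!![1, 0; 1, 1], by norm_num [Matrix.det_fin_two_of]⟩

/-- `Ā`, the image of `A` in `PSL₂(ℤ)`. -/
def Abar : PSL2Z := projSL matA

/-- `B̄`, the image of `B` in `PSL₂(ℤ)`. -/
def Bbar : PSL2Z := projSL matB

/-
Ping-pong: `Ā` translates `ℍ` by `2` and `B̄ = S̄ Ā⁻¹ S̄⁻¹`, so `Ā`, `B̄` freely generate a free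
group, and a Euclidean descent on the lower left entry shows that they generate `Γ̄(2)`. Hence
`Γ̄(2) ≅ F₂`, and the subgroup in question corresponds to the subgroup of `F₂` generated by the six
words in `a`, `b`. That subgroup is the stabilizer of a point for a transitive action of `F₂` on
five points: it fixes the point because its generators do, and contains the whole stabilizer by
Schreier's lemma, which only asks that it contain the ten Schreier generators.
-/

open UpperHalfPlane ModularGroup Pointwise

lemma smul_eq_self_of_mem_center {g : SL2Z} (hg : g ∈ Subgroup.center SL2Z) (z : ℍ) :
    g • z = z := by
  obtain ⟨r, hr, hg⟩ := Matrix.SpecialLinearGroup.mem_center_iff.mp hg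
  rcases (by simpa using hr : r = 1 ∨ r = -1) with rfl | rfl
  · rw [show g = 1 from Subtype.ext (by simp [← hg]), one_smul]
  · rw [show g = -1 from Subtype.ext (by simp [← hg]), SL_neg_smul, one_smul]

noncomputable instance : MulAction PSL2Z ℍ :=
  MulAction.compHom ℍ <| QuotientGroup.lift (Subgroup.center SL2Z) (MulAction.toPermHom SL2Z ℍ)
    fun _ hg ↦ Equiv.ext (smul_eq_self_of_mem_center hg)

lemma projSL_smul (g : SL2Z) (z : ℍ) : projSL g • z = g • z := rfl

lemma matA_eq_T_sq : matA = T ^ (2 : ℤ) := Subtype.ext (by rw [coe_T_zpow]; rfl)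

lemma matB_eq_conj : matB = S * matA⁻¹ * S⁻¹ := by
  rw [matA_eq_T_sq]; decide

def Sbar : PSL2Z := projSL S

lemma Bbar_eq_conj : Bbar = Sbar * Abar⁻¹ * Sbar⁻¹ := by
  simp only [Bbar, Sbar, Abar, ← map_inv, ← map_mul, matB_eq_conj]

lemma re_Abar_zpow_smul (n : ℤ) (z : ℍ) : (Abar ^ n • z).re = z.re + 2 * n := by
  rw [Abar, ← map_zpow, projSL_smul, matA_eq_T_sq, ← zpow_mul, re_T_zpow_smul]; push_cast; ring

lemma re_Sbar_smul (z : ℍ) : (Sbar • z).re = -z.re / (z.re ^ 2 + z.im ^ 2) := by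
  rw [Sbar, projSL_smul, modular_S_smul]
  simp [Complex.normSq_apply, neg_div, sq]

lemma re_Sbar_smul_mem_Ioo_of_re_le {z : ℍ} (hz : z.re ≤ -1) : (Sbar • z).re ∈ Set.Ioo 0 1 := by
  have := z.im_pos
  rw [re_Sbar_smul, Set.mem_Ioo, lt_div_iff₀ (by positivity), div_lt_one (by positivity)]
  constructor <;> nlinarith

lemma re_Sbar_smul_mem_Ioo_of_le_re {z : ℍ} (hz : 1 ≤ z.re) : (Sbar • z).re ∈ Set.Ioo (-1) 0 := by
  have := z.im_pos
  rw [re_Sbar_smul, Set.mem_Ioo, lt_div_iff₀ (by positivity), div_lt_iff₀ (by positivity)]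
  constructor <;> nlinarith

lemma smul_compl_subset_conj {G α : Type*} [Group G] [MulAction G α] {a g : G} {X Y : Set α}
    (h : a • Yᶜ ⊆ X) : (g * a * g⁻¹) • (g • Y)ᶜ ⊆ g • X := by
  rw [← Set.smul_set_compl, mul_smul, mul_smul, inv_smul_smul]
  exact Set.smul_set_mono h

/-- Since `B̄ = S̄ Ā⁻¹ S̄⁻¹`, the ping-pong sets of `B̄` are the `S̄`-images of those of `Ā`,
swapped. -/
def pingX : Fin 2 → Set ℍ := ![re ⁻¹' Set.Ici 1, Sbar • re ⁻¹' Set.Iic (-1)]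

def pingY : Fin 2 → Set ℍ := ![re ⁻¹' Set.Iic (-1), Sbar • re ⁻¹' Set.Ici 1]

lemma pingX_subset (i : Fin 2) : pingX i ⊆ re ⁻¹' ![Set.Ici 1, Set.Ioo 0 1] i := by
  fin_cases i
  · exact subset_rfl
  · rintro _ ⟨z, hz, rfl⟩; exact re_Sbar_smul_mem_Ioo_of_re_le hz

lemma pingY_subset (i : Fin 2) : pingY i ⊆ re ⁻¹' ![Set.Iic (-1), Set.Ioo (-1) 0] i := by
  fin_cases i
  · exact subset_rfl
  · rintro _ ⟨z, hz, rfl⟩; exact re_Sbar_smul_mem_Ioo_of_le_re hz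

lemma Abar_smul_compl_subset : Abar • (pingY 0)ᶜ ⊆ pingX 0 := by
  rintro _ ⟨z, hz, rfl⟩
  have := re_Abar_zpow_smul 1 z
  simp_all [pingX, pingY]
  linarith

lemma Abar_inv_smul_compl_subset : Abar⁻¹ • (pingX 0)ᶜ ⊆ pingY 0 := by
  rintro _ ⟨z, hz, rfl⟩
  have := re_Abar_zpow_smul (-1) z
  simp_all [pingX, pingY]
  linarith

theorem injective_lift_Abar_Bbar : Function.Injective (FreeGroup.lift ![Abar, Bbar]) := by
  refine FreeGroup.injective_lift_of_ping_pong _ pingX pingY ?_ ?_ ?_ ?_ ?_ ?_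
  · intro i; fin_cases i
    · exact ⟨⟨1 + Complex.I, by simp⟩, by simp [pingX]⟩
    · exact ⟨Sbar • ⟨-1 + Complex.I, by simp⟩, Set.smul_mem_smul_set (by simp)⟩
  · intro i j hij
    fin_cases i <;> fin_cases j <;> first
      | exact absurd rfl hij
      | exact (Set.disjoint_left.2 fun x hx hy ↦ by simp at hx hy; linarith).preimage re |>.mono
          (pingX_subset _) (pingX_subset _)
  · intro i j hij
    fin_cases i <;> fin_cases j <;> first
      | exact absurd rfl hij
      | exact (Set.disjoint_left.2 fun x hx hy ↦ by simp at hx hy; linarith).preimage re |>.mono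
          (pingY_subset _) (pingY_subset _)
  · intro i j
    fin_cases i <;> fin_cases j <;>
      exact (Set.disjoint_left.2 fun x hx hy ↦ by simp at hx hy; linarith).preimage re |>.mono
          (pingX_subset _) (pingY_subset _)
  · intro i; fin_cases i
    · exact Abar_smul_compl_subset
    · change Bbar • (Sbar • pingX 0)ᶜ ⊆ Sbar • pingY 0
      rw [Bbar_eq_conj]
      exact smul_compl_subset_conj Abar_inv_smul_compl_subset
  · intro i; fin_cases i
    · exact Abar_inv_smul_compl_subset
    · change Bbar⁻¹ • (Sbar • pingY 0)ᶜ ⊆ Sbar • pingX 0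
      rw [show Bbar⁻¹ = Sbar * Abar * Sbar⁻¹ by rw [Bbar_eq_conj]; group]
      exact smul_compl_subset_conj Abar_smul_compl_subset

open CongruenceSubgroup

/-- Reduce `v + |m|` modulo `2m`: the remainder is odd, hence nonzero, so `v + 2km` lands strictly
inside `(-|m|, |m|)`. -/
lemma exists_natAbs_add_two_mul_lt {v m : ℤ} (hm : m ≠ 0) (hodd : Odd (v + m)) :
    ∃ k, (v + 2 * k * m).natAbs < m.natAbs := by
  have h2m : 2 * m ≠ 0 := by omega
  have hdiv := Int.emod_add_mul_ediv (v + m.natAbs) (2 * m)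
  have hlo := Int.emod_nonneg (v + m.natAbs) h2m
  have hhi := Int.emod_lt (v + m.natAbs) h2m
  obtain ⟨t, ht⟩ := hodd
  refine ⟨-((v + m.natAbs) / (2 * m)), ?_⟩
  generalize (v + m.natAbs) / (2 * m) = q at *
  generalize (v + m.natAbs) % (2 * m) = r at *
  rw [show v + 2 * -q * m = v - 2 * (m * q) by ring]
  rw [mul_assoc] at hdiv
  omega

lemma coe_matA_zpow (k : ℤ) : ↑(matA ^ k) = !![1, 2 * k; 0, 1] := by
  rw [matA_eq_T_sq, ← zpow_mul, coe_T_zpow]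

lemma coe_matB_zpow (k : ℤ) : ↑(matB ^ k) = !![1, 0; 2 * k, 1] := by
  rw [matB_eq_conj, conj_zpow, inv_zpow', Matrix.SpecialLinearGroup.coe_mul,
    Matrix.SpecialLinearGroup.coe_mul, coe_matA_zpow, S_inv]
  simp

lemma matA_zpow_mul_apply_zero_zero (k : ℤ) (M : SL2Z) :
    (matA ^ k * M) 0 0 = M 0 0 + 2 * k * M 1 0 := by
  simp [Matrix.SpecialLinearGroup.coe_mul, coe_matA_zpow, Matrix.mul_apply, Fin.sum_univ_two]

lemma matA_zpow_mul_apply_one_zero (k : ℤ) (M : SL2Z) : (matA ^ k * M) 1 0 = M 1 0 := by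
  simp [Matrix.SpecialLinearGroup.coe_mul, coe_matA_zpow, Matrix.mul_apply, Fin.sum_univ_two]

lemma matB_zpow_mul_apply_one_zero (k : ℤ) (M : SL2Z) :
    (matB ^ k * M) 1 0 = M 1 0 + 2 * k * M 0 0 := by
  simp [Matrix.SpecialLinearGroup.coe_mul, coe_matB_zpow, Matrix.mul_apply, Fin.sum_univ_two]
  ring

lemma projSL_neg (M : SL2Z) : projSL (-M) = projSL M := by
  have : projSL (-1) = 1 :=
    (QuotientGroup.eq_one_iff _).2 (Subgroup.mem_center_iff.2 fun g ↦ by simp)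
  rw [← neg_one_mul, map_mul, this, one_mul]

lemma matA_mem_Gamma_two : matA ∈ Gamma 2 := Gamma_mem.2 ⟨rfl, rfl, rfl, rfl⟩

lemma matB_mem_Gamma_two : matB ∈ Gamma 2 := Gamma_mem.2 ⟨rfl, rfl, rfl, rfl⟩

lemma exists_projSL_eq_Abar_zpow {M : SL2Z} (hM : M ∈ Gamma 2) (hc : M 1 0 = 0) :
    ∃ k : ℤ, projSL M = Abar ^ k := by
  obtain ⟨-, hb, -, -⟩ := Gamma_mem.mp hM
  obtain ⟨k, hk⟩ := ZMod.intCast_eq_zero_iff_even.mp hb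
  have hdet : M 0 0 * M 1 1 = 1 := by
    have := M.det_coe
    rwa [Matrix.det_fin_two, hc, mul_zero, sub_zero] at this
  rcases Int.eq_one_or_neg_one_of_mul_eq_one' hdet with ⟨ha, hd⟩ | ⟨ha, hd⟩
  · refine ⟨k, ?_⟩
    rw [Abar, ← map_zpow]
    congr 1
    ext i j
    fin_cases i <;> fin_cases j <;> simp [coe_matA_zpow, ha, hc, hd, hk, two_mul]
  · refine ⟨-k, ?_⟩
    rw [Abar, ← map_zpow, ← projSL_neg]
    congr 1
    ext i j
    fin_cases i <;> fin_cases j <;> simp [coe_matA_zpow, ha, hc, hd, hk, two_mul]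

lemma exists_natAbs_apply_one_zero_lt {M : SL2Z} (hM : M ∈ Gamma 2) (hc : M 1 0 ≠ 0) :
    ∃ k l : ℤ, ((matB ^ l * (matA ^ k * M)) 1 0).natAbs < (M 1 0).natAbs := by
  obtain ⟨ha, -, hc2, -⟩ := Gamma_mem.mp hM
  rw [ZMod.intCast_eq_one_iff_odd] at ha
  rw [ZMod.intCast_eq_zero_iff_even] at hc2
  obtain ⟨k, hk⟩ := exists_natAbs_add_two_mul_lt hc (ha.add_even hc2)
  set N := matA ^ k * M
  have hN : N 0 0 = M 0 0 + 2 * k * M 1 0 := matA_zpow_mul_apply_zero_zero k M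
  have hNodd : Odd (N 0 0) := hN ▸ ha.add_even (by simp [hc2, mul_assoc])
  obtain ⟨l, hl⟩ :=
    exists_natAbs_add_two_mul_lt (by rintro h; simp [h] at hNodd) (hc2.add_odd hNodd)
  refine ⟨k, l, ?_⟩
  rw [matB_zpow_mul_apply_one_zero, matA_zpow_mul_apply_one_zero]
  exact hl.trans (hN ▸ hk)

theorem projSL_mem_closure_of_mem_Gamma_two {M : SL2Z} (hM : M ∈ Gamma 2) :
    projSL M ∈ Subgroup.closure {Abar, Bbar} := by
  have hA : Abar ∈ Subgroup.closure {Abar, Bbar} := Subgroup.subset_closure (by simp)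
  have hB : Bbar ∈ Subgroup.closure {Abar, Bbar} := Subgroup.subset_closure (by simp)
  induction h : (M 1 0).natAbs using Nat.strong_induction_on generalizing M with
  | _ n ih =>
  by_cases hc : M 1 0 = 0
  · obtain ⟨k, hk⟩ := exists_projSL_eq_Abar_zpow hM hc
    exact hk ▸ zpow_mem hA k
  obtain ⟨k, l, hlt⟩ := exists_natAbs_apply_one_zero_lt hM hc
  have hN : matB ^ l * (matA ^ k * M) ∈ Gamma 2 :=
    mul_mem (zpow_mem matB_mem_Gamma_two l) (mul_mem (zpow_mem matA_mem_Gamma_two k) hM)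
  have := ih _ (h ▸ hlt) hN rfl
  rw [show M = matA ^ (-k) * (matB ^ (-l) * (matB ^ l * (matA ^ k * M))) by group,
    map_mul, map_mul, map_zpow, map_zpow]
  exact mul_mem (zpow_mem hA _) (mul_mem (zpow_mem hB _) this)

theorem GammaBar_two_eq_closure : GammaBar 2 = Subgroup.closure {Abar, Bbar} := by
  refine le_antisymm ?_ ((Subgroup.closure_le _).2 ?_)
  · rintro _ ⟨M, hM, rfl⟩
    exact projSL_mem_closure_of_mem_Gamma_two hM
  · rintro _ (rfl | rfl)
    exacts [⟨matA, matA_mem_Gamma_two, rfl⟩, ⟨matB, matB_mem_Gamma_two, rfl⟩]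

theorem MulAction.stabilizer_le_of_schreier_generators_mem {G X : Type*} [Group G]
    [MulAction G X] {S : Set G} (hS : Subgroup.closure S = ⊤) {H : Subgroup G} {x₀ : X}
    (t : X → G) (ht : t x₀ ∈ H) (hS_mem : ∀ s ∈ S, ∀ x, (t (s • x))⁻¹ * s * t x ∈ H) :
    stabilizer G x₀ ≤ H := by
  have key (g : G) : ∀ x, (t (g • x))⁻¹ * g * t x ∈ H := by
    have hg : g ∈ Subgroup.closure S := hS ▸ Subgroup.mem_top g
    induction hg using Subgroup.closure_induction with
    | mem s hs => exact hS_mem s hs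
    | one => simp
    | mul g h _ _ hg hh =>
      intro x
      rw [mul_smul]
      convert H.mul_mem (hg (h • x)) (hh x) using 1
      group
    | inv g _ hg =>
      intro x
      convert H.inv_mem (hg (g⁻¹ • x)) using 1
      rw [smul_inv_smul]
      group
  intro g hg
  have := H.mul_mem (H.mul_mem ht (key g x₀)) (H.inv_mem ht)
  rwa [mem_stabilizer_iff.mp hg, show t x₀ * ((t x₀)⁻¹ * g * t x₀) * (t x₀)⁻¹ = g by group]
    at this

namespace GraphA

open FreeGroup

abbrev a : FreeGroup (Fin 2) := of 0
abbrev b : FreeGroup (Fin 2) := of 1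

def words : Set (FreeGroup (Fin 2)) :=
  {a ^ 3, b ^ 2 * a⁻¹, a ^ 2 * b ^ 2, a * b * a⁻¹ ^ 2, b⁻¹ * a⁻¹ * b, a * b⁻¹ * a⁻¹ * b * a⁻¹}

def wordSubgroup : Subgroup (FreeGroup (Fin 2)) := Subgroup.closure words

/-- The coset table of `wordSubgroup`: the coset `transversal x * wordSubgroup` is numbered `x`,
and `a`, `b` permute the five cosets by left multiplication. -/
def cosetPerm : FreeGroup (Fin 2) →* Equiv.Perm (Fin 5) :=
  FreeGroup.lift ![c[0, 1, 2], c[0, 3, 1, 2, 4]]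

scoped instance : MulAction (FreeGroup (Fin 2)) (Fin 5) := .compHom _ cosetPerm

def transversal : Fin 5 → FreeGroup (Fin 2) := ![1, a, a⁻¹, b, b⁻¹]

lemma transversal_smul_zero (x : Fin 5) : transversal x • (0 : Fin 5) = x := by
  revert x; decide

lemma wordSubgroup_le_stabilizer : wordSubgroup ≤ MulAction.stabilizer _ (0 : Fin 5) := by
  rw [wordSubgroup, Subgroup.closure_le, words]
  rintro g (rfl | rfl | rfl | rfl | rfl | rfl) <;> exact MulAction.mem_stabilizer_iff.2 (by decide)

lemma schreier_generator_mem (i : Fin 2) (x : Fin 5) :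
    (transversal (of i • x))⁻¹ * of i * transversal x ∈ wordSubgroup := by
  have gen : ∀ g ∈ words, g ∈ wordSubgroup := fun _ h ↦ Subgroup.subset_closure h
  fin_cases i <;> fin_cases x
  · show a⁻¹ * a * 1 ∈ wordSubgroup
    simp
  · show a⁻¹⁻¹ * a * a ∈ wordSubgroup
    rw [show a⁻¹⁻¹ * a * a = a ^ 3 by decide]
    exact gen _ (by simp [words])
  · show 1⁻¹ * a * a⁻¹ ∈ wordSubgroup
    simp
  · show b⁻¹ * a * b ∈ wordSubgroup
    rw [show b⁻¹ * a * b = (b⁻¹ * a⁻¹ * b)⁻¹ by decide]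
    exact inv_mem (gen _ (by simp [words]))
  · show b⁻¹⁻¹ * a * b⁻¹ ∈ wordSubgroup
    rw [show b⁻¹⁻¹ * a * b⁻¹ =
      b ^ 2 * a⁻¹ * (a * b⁻¹ * a⁻¹ * b * a⁻¹)⁻¹ * (b ^ 2 * a⁻¹)⁻¹ by decide]
    exact mul_mem (mul_mem (gen _ (by simp [words])) (inv_mem (gen _ (by simp [words]))))
      (inv_mem (gen _ (by simp [words])))
  · show b⁻¹ * b * 1 ∈ wordSubgroup
    simp
  · show a⁻¹⁻¹ * b * a ∈ wordSubgroup
    rw [show a⁻¹⁻¹ * b * a = a * b * a⁻¹ ^ 2 * a ^ 3 by decide]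
    exact mul_mem (gen _ (by simp [words])) (gen _ (by simp [words]))
  · show b⁻¹⁻¹ * b * a⁻¹ ∈ wordSubgroup
    rw [show b⁻¹⁻¹ * b * a⁻¹ = b ^ 2 * a⁻¹ by decide]
    exact gen _ (by simp [words])
  · show a⁻¹ * b * b ∈ wordSubgroup
    rw [show a⁻¹ * b * b = (a ^ 3)⁻¹ * (a ^ 2 * b ^ 2) by decide]
    exact mul_mem (inv_mem (gen _ (by simp [words]))) (gen _ (by simp [words]))
  · show 1⁻¹ * b * b⁻¹ ∈ wordSubgroup
    simp

theorem wordSubgroup_eq_stabilizer : wordSubgroup = MulAction.stabilizer _ (0 : Fin 5) := by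
  refine le_antisymm wordSubgroup_le_stabilizer ?_
  refine MulAction.stabilizer_le_of_schreier_generators_mem (FreeGroup.closure_range_of _)
    transversal (by simp [transversal]) ?_
  rintro _ ⟨i, rfl⟩ x
  exact schreier_generator_mem i x

theorem index_wordSubgroup : wordSubgroup.index = 5 := by
  rw [wordSubgroup_eq_stabilizer, MulAction.index_stabilizer,
    Set.eq_univ_of_forall fun x ↦
      MulAction.mem_orbit_iff.2 ⟨transversal x, transversal_smul_zero x⟩,
    Set.ncard_univ, Nat.card_eq_fintype_card, Fintype.card_fin]

end GraphA

/-- The group of graph (a): `⟨A³, B²A⁻¹, A²B², ABA⁻², B⁻¹A⁻¹B, AB⁻¹A⁻¹BA⁻¹⟩` is a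
subgroup of `Γ̄(2)` of index 5 in `Γ̄(2)`. -/
theorem graph_a_index_five :
    Subgroup.closure ({Abar ^ 3, Bbar ^ 2 * Abar⁻¹, Abar ^ 2 * Bbar ^ 2,
        Abar * Bbar * Abar⁻¹ ^ 2, Bbar⁻¹ * Abar⁻¹ * Bbar,
        Abar * Bbar⁻¹ * Abar⁻¹ * Bbar * Abar⁻¹} : Set PSL2Z) ≤ GammaBar 2 ∧
    (Subgroup.closure ({Abar ^ 3, Bbar ^ 2 * Abar⁻¹, Abar ^ 2 * Bbar ^ 2,
        Abar * Bbar * Abar⁻¹ ^ 2, Bbar⁻¹ * Abar⁻¹ * Bbar,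
        Abar * Bbar⁻¹ * Abar⁻¹ * Bbar * Abar⁻¹} : Set PSL2Z)).relIndex (GammaBar 2) = 5 := by
  set φ := FreeGroup.lift ![Abar, Bbar]
  have hW : Subgroup.closure ({Abar ^ 3, Bbar ^ 2 * Abar⁻¹, Abar ^ 2 * Bbar ^ 2,
      Abar * Bbar * Abar⁻¹ ^ 2, Bbar⁻¹ * Abar⁻¹ * Bbar,
      Abar * Bbar⁻¹ * Abar⁻¹ * Bbar * Abar⁻¹} : Set PSL2Z) = GraphA.wordSubgroup.map φ := by
    simp [GraphA.wordSubgroup, GraphA.words, MonoidHom.map_closure, Set.image_insert_eq, φ]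
  have hΓ : GammaBar 2 = (⊤ : Subgroup _).map φ := by
    rw [← MonoidHom.range_eq_map, FreeGroup.range_lift_eq_closure, GammaBar_two_eq_closure,
      Matrix.range_cons_cons_empty]
  rw [hW, hΓ, Subgroup.relIndex_map_map_of_injective _ _ injective_lift_Abar_Bbar,
    Subgroup.relIndex_top_right, GraphA.index_wordSubgroup]
  exact ⟨Subgroup.map_mono le_top, rfl⟩
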